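/- Assume σ ≠ 0. For every integer 1 ≤ l ≤ m, the conditional expectation of the number of old blocks re-observed with frequency l, given only the number of blocks, satisfies E[R_l | K_n = j] = (1/C(n,j;σ))·binom(m,l)·(−σ·(1−σ)_{(l−1)↑})·Σ_{s=1}^{n−(j−1)} binom(n,s)·C(s,1;σ−l)·C(n−s, j−1; σ)·Σ_{k=0}^{m} (V_{n+m,j+k}/V_{n,j})·C(m−l, k; σ, −n + s + (j−1)σ)/σ^k. -/

import Mathlib

open Finset

attribute [local instance] Classical.propDecidable

noncomputable section

/-- Rising factorial `x(x+1)⋯(x+N−1)`. -/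
def risingFac (x : ℝ) (N : ℕ) : ℝ := ∏ i ∈ Finset.range N, (x + i)

/-- Falling factorial `x(x−1)⋯(x−N+1)`. -/
def fallingFac (x : ℝ) (N : ℕ) : ℝ := ∏ i ∈ Finset.range N, (x - i)

/-- Noncentral generalized factorial coefficient `C(N,k;σ,γ)`. -/
def gfc (N k : ℕ) (σ γ : ℝ) : ℝ :=
  (1 / (Nat.factorial k : ℝ)) *
    ∑ i ∈ Finset.range (k + 1),
      (-1 : ℝ) ^ i * (Nat.choose k i : ℝ) * risingFac (-(i : ℝ) * σ - γ) N

/-- Central generalized factorial coefficient `C(N,k;σ)`. -/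
def cgfc (N k : ℕ) (σ : ℝ) : ℝ := gfc N k σ 0

/-- Binomial coefficient over `ℤ`, zero unless `0 ≤ b ≤ a`. -/
def ibinom (a b : ℤ) : ℝ :=
  if 0 ≤ b ∧ b ≤ a then (Nat.choose a.toNat b.toNat : ℝ) else 0

/-- Multinomial coefficient `m!/((l!)^r (m−rl)!)`, zero if `rl > m`. -/
def multinom (m l r : ℕ) : ℝ :=
  if r * l ≤ m then
    (Nat.factorial m : ℝ) / ((Nat.factorial l : ℝ) ^ r * (Nat.factorial (m - r * l) : ℝ))
  else 0

/-- `P` is a set partition of the finset `s`. -/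
def IsPartOn {α : Type*} (s : Finset α) (P : Finset (Finset α)) : Prop :=
  (∀ B ∈ P, B ⊆ s) ∧ ∅ ∉ P ∧ ∀ a ∈ s, ∃! B, B ∈ P ∧ a ∈ B

/-- Restriction of a partition to `s`. -/
def restrictPart {α : Type*} [DecidableEq α] (P : Finset (Finset α)) (s : Finset α) :
    Finset (Finset α) := (P.image fun C => C ∩ s).erase ∅

/-- Gibbs probability of a partition with block sizes `|C|` and `VN k` the Gibbs weight. -/
def gibbsW {α : Type*} (σ : ℝ) (VN : ℕ → ℝ) (P : Finset (Finset α)) : ℝ :=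
  VN P.card * ∏ C ∈ P, risingFac (1 - σ) (C.card - 1)

/-- Ewens–Pitman weight system. -/
def EPV (σ θ : ℝ) : ℕ → ℕ → ℝ :=
  fun N k => (∏ i ∈ Finset.range k, (θ + (i : ℝ) * σ)) / risingFac θ N

/-- The "old" elements `{1,…,n}` inside `{1,…,n+m}`. -/
def oldSet (n m : ℕ) : Finset (Fin (n + m)) :=
  Finset.univ.filter fun x => (x : ℕ) < n

/-- Number of new elements in the block of `ρ` containing the old block `Bi`. -/
def Scount (n m : ℕ) (Bi : Finset (Fin (n + m))) (ρ : Finset (Finset (Fin (n + m)))) : ℕ :=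
  ∑ C ∈ ρ.filter (fun C => Bi ⊆ C), (C \ oldSet n m).card

/-- Partitions of `{1,…,n+m}` extending the partition `πP` of the old elements. -/
def extensions (n m : ℕ) (πP : Finset (Finset (Fin (n + m)))) :
    Finset (Finset (Finset (Fin (n + m)))) :=
  Finset.univ.filter fun ρ => IsPartOn Finset.univ ρ ∧ restrictPart ρ (oldSet n m) = πP

/-- Conditional expectation given complete information (the initial partition `πP`). -/
def condExpPi (σ : ℝ) (V : ℕ → ℕ → ℝ) (n m : ℕ) (πP : Finset (Finset (Fin (n + m))))
    (f : Finset (Finset (Fin (n + m))) → ℝ) : ℝ :=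
  (∑ ρ ∈ extensions n m πP, f ρ * gibbsW σ (V (n + m)) ρ) /
    (∑ ρ ∈ extensions n m πP, gibbsW σ (V (n + m)) ρ)

/-- Partitions of `{1,…,n+m}` whose restriction to the old elements has exactly `j` blocks. -/
def withJ (n m j : ℕ) : Finset (Finset (Finset (Fin (n + m)))) :=
  Finset.univ.filter fun ρ =>
    IsPartOn Finset.univ ρ ∧ (restrictPart ρ (oldSet n m)).card = j

/-- Partitions of `s` with exactly `j` blocks. -/
def partsJOf {α : Type*} [Fintype α] (s : Finset α) (j : ℕ) :
    Finset (Finset (Finset α)) :=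
  Finset.univ.filter fun π' => IsPartOn s π' ∧ π'.card = j

/-- Conditional expectation given the incomplete information `K_n = j`. -/
def condExpK (σ : ℝ) (V : ℕ → ℕ → ℝ) (n m j : ℕ)
    (f : Finset (Finset (Fin (n + m))) → ℝ) : ℝ :=
  (∑ ρ ∈ withJ n m j, f ρ * gibbsW σ (V (n + m)) ρ) /
    (∑ π' ∈ partsJOf (oldSet n m) j, gibbsW σ (V n) π')

/-- Number of old blocks (indexed by `B`) re-observed in the additional sample. -/
def RcntB (n m j : ℕ) (B : Fin j → Finset (Fin (n + m)))
    (ρ : Finset (Finset (Fin (n + m)))) : ℕ :=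
  (Finset.univ.filter fun i : Fin j => Scount n m (B i) ρ ≠ 0).card

/-- Number of old blocks (indexed by `B`) re-observed with frequency `l`. -/
def RlcntB (n m j l : ℕ) (B : Fin j → Finset (Fin (n + m)))
    (ρ : Finset (Finset (Fin (n + m)))) : ℕ :=
  (Finset.univ.filter fun i : Fin j => Scount n m (B i) ρ = l).card

/-- Number of blocks of the restriction whose containing block has a new element. -/
def Rcnt (n m : ℕ) (ρ : Finset (Finset (Fin (n + m)))) : ℕ :=
  ((restrictPart ρ (oldSet n m)).filter fun Bi =>
    ∃ C ∈ ρ, Bi ⊆ C ∧ (C \ oldSet n m) ≠ ∅).card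

/-- Number of blocks of the restriction whose containing block has exactly `l` new elements. -/
def Rlcnt (n m l : ℕ) (ρ : Finset (Finset (Fin (n + m)))) : ℕ :=
  ((restrictPart ρ (oldSet n m)).filter fun Bi =>
    ∃ C ∈ ρ, Bi ⊆ C ∧ (C \ oldSet n m).card = l).card

/-- Number of bijections from `Fin j` onto the blocks of `π'` satisfying `Q`. -/
def bijCount {α : Type*} [Fintype α] (j : ℕ) (π' : Finset (Finset α))
    (Q : (Fin j → Finset α) → Prop) : ℕ :=
  ((Finset.univ : Finset (Fin j → Finset α)).filter fun β =>
    Function.Injective β ∧ Finset.image β Finset.univ = π' ∧ Q β).card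

/-- Conditional expectation given almost-complete information. -/
def condExpTau (σ : ℝ) (V : ℕ → ℕ → ℝ) (n m j p : ℕ) (τ : Fin p → Fin j) (nτ : Fin p → ℕ)
    (f : Finset (Finset (Fin (n + m))) → ℝ) : ℝ :=
  (∑ ρ ∈ withJ n m j,
      (bijCount j (restrictPart ρ (oldSet n m)) (fun β => ∀ i, (β (τ i)).card = nτ i) : ℝ) *
        f ρ * gibbsW σ (V (n + m)) ρ) /
    (∑ π' ∈ partsJOf (oldSet n m) j,
      (bijCount j π' (fun β => ∀ i, (β (τ i)).card = nτ i) : ℝ) * gibbsW σ (V n) π')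


/-!
Conditionally on its restriction `π` to the old elements, a partition `ρ` is built by adding
the new elements one at a time: each either opens a new block or joins a block `C`, which
multiplies `∏ (1 - σ)_{(|C| - 1)↑}` by `|C| - σ`. Summed over all extensions, the weights
therefore obey the triangular recurrence of `C(M, k; σ, γ) / σ^k` with `γ = |π| σ - n`.
For `R_l` one first picks the old block `B` (of size `i`) and the `l` new elements joining it;
what remains is an extension of `π \ {B}` on the other elements, and summing over the `π` with
`j` blocks produces `C(n - i, j - 1; σ) / σ^(j - 1)`. The denominator is
`V_{n,j} C(n, j; σ) / σ^j` in the same way.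
-/

lemma risingFac_zero (x : ℝ) : risingFac x 0 = 1 := by simp [risingFac]

lemma risingFac_succ (x : ℝ) (N : ℕ) : risingFac x (N + 1) = risingFac x N * (x + N) :=
  Finset.prod_range_succ _ _

lemma risingFac_add (x : ℝ) (a b : ℕ) :
    risingFac x (a + b) = risingFac x a * risingFac (x + a) b := by
  induction b with
  | zero => simp [risingFac_zero]
  | succ b ih =>
    rw [← Nat.add_assoc, risingFac_succ, ih, risingFac_succ]
    push_cast
    ring

lemma risingFac_zero_left {N : ℕ} (hN : N ≠ 0) : risingFac 0 N = 0 :=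
  Finset.prod_eq_zero (Finset.mem_range.mpr (Nat.pos_of_ne_zero hN)) (by simp)

lemma gfc_zero_right (N : ℕ) (σ γ : ℝ) : gfc N 0 σ γ = risingFac (-γ) N := by
  simp [gfc]

lemma cast_succ_sub_mul_choose (k i : ℕ) :
    ((k + 1 : ℝ) - i) * ((k + 1).choose i : ℝ) = (k + 1) * (k.choose i : ℝ) := by
  rcases le_or_gt i (k + 1) with hi | hi
  · have h := congrArg (fun t : ℕ => (t : ℝ)) (Nat.choose_mul_succ_eq k i)
    push_cast [Nat.cast_sub hi] at h
    linarith
  · simp [Nat.choose_eq_zero_of_lt hi, Nat.choose_eq_zero_of_lt (Nat.lt_of_succ_lt hi)]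

lemma gfc_succ_succ (N k : ℕ) (σ γ : ℝ) :
    gfc (N + 1) (k + 1) σ γ =
      σ * gfc N k σ γ + ((N : ℝ) - (k + 1) * σ - γ) * gfc N (k + 1) σ γ := by
  set r : ℕ → ℝ := fun i => (-1 : ℝ) ^ i * risingFac (-(i : ℝ) * σ - γ) N with hr_def
  have hr (K : ℕ) :
      gfc N K σ γ =
        1 / (K.factorial : ℝ) * ∑ i ∈ Finset.range (K + 1), (K.choose i : ℝ) * r i := by
    simp only [gfc, hr_def]
    congr 1
    exact Finset.sum_congr rfl fun i _ => by ring
  -- the last factor of `risingFac (-iσ - γ) (N + 1)` is `(N - (k + 1)σ - γ) + (k + 1 - i)σ`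
  have hsplit : ∀ i ∈ Finset.range (k + 2),
      (-1 : ℝ) ^ i * ((k + 1).choose i : ℝ) * risingFac (-(i : ℝ) * σ - γ) (N + 1) =
        ((N : ℝ) - (k + 1) * σ - γ) * (((k + 1).choose i : ℝ) * r i) +
          σ * (k + 1) * ((k.choose i : ℝ) * r i) := by
    intro i _
    rw [risingFac_succ]
    linear_combination (σ * r i) * cast_succ_sub_mul_choose k i
  have hlast : ∑ i ∈ Finset.range (k + 2), (k.choose i : ℝ) * r i =
      ∑ i ∈ Finset.range (k + 1), (k.choose i : ℝ) * r i := by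
    simp [Finset.sum_range_succ _ (k + 1)]
  have hfac : ((k + 1).factorial : ℝ) = (k + 1) * k.factorial := by
    push_cast [Nat.factorial_succ]; ring
  have hk : (k.factorial : ℝ) ≠ 0 := by positivity
  rw [hr k, hr (k + 1), gfc, Finset.sum_congr rfl hsplit, Finset.sum_add_distrib,
    ← Finset.mul_sum, ← Finset.mul_sum, hlast, hfac]
  field_simp
  ring

/-- `C(N,k;σ,γ) / σ^k`, defined by its triangular recurrence so that it makes sense at
`σ = 0`. -/
def genStirling (σ γ : ℝ) : ℕ → ℕ → ℝ
  | 0, 0 => 1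
  | 0, _ + 1 => 0
  | M + 1, 0 => ((M : ℝ) - γ) * genStirling σ γ M 0
  | M + 1, k + 1 =>
    genStirling σ γ M k + ((M : ℝ) - (k + 1) * σ - γ) * genStirling σ γ M (k + 1)

lemma genStirling_eq_zero_of_lt (σ γ : ℝ) {N k : ℕ} (h : N < k) :
    genStirling σ γ N k = 0 := by
  induction N generalizing k with
  | zero => obtain ⟨k, rfl⟩ := Nat.exists_eq_add_of_lt h; rfl
  | succ N ih =>
    obtain ⟨k, rfl⟩ : ∃ k', k = k' + 1 := ⟨k - 1, by omega⟩
    simp only [genStirling, ih (by omega : N < k), ih (by omega : N < k + 1), mul_zero, add_zero]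

lemma gfc_eq_pow_mul_genStirling (N k : ℕ) (σ γ : ℝ) :
    gfc N k σ γ = σ ^ k * genStirling σ γ N k := by
  induction N generalizing k with
  | zero =>
    cases k with
    | zero => simp [gfc, genStirling, risingFac_zero]
    | succ k =>
      have h := Int.alternating_sum_range_choose_of_ne (n := k + 1) (by omega)
      have h' : ∑ i ∈ Finset.range (k + 2), (-1 : ℝ) ^ i * ((k + 1).choose i : ℝ) = 0 := by
        exact_mod_cast h
      simp [gfc, genStirling, risingFac_zero, h']
  | succ N ih =>
    cases k with
    | zero =>
      have h0 := ih 0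
      rw [gfc_zero_right, pow_zero, one_mul] at h0
      rw [gfc_zero_right, risingFac_succ, h0, pow_zero, one_mul, genStirling]
      ring
    | succ k =>
      rw [gfc_succ_succ, ih k, ih (k + 1), genStirling]
      ring

lemma cgfc_eq_pow_mul_genStirling (N k : ℕ) (σ : ℝ) :
    cgfc N k σ = σ ^ k * genStirling σ 0 N k :=
  gfc_eq_pow_mul_genStirling N k σ 0

lemma cgfc_one {N : ℕ} (hN : N ≠ 0) (τ : ℝ) : cgfc N 1 τ = -risingFac (-τ) N := by
  simp [cgfc, gfc, Finset.sum_range_succ, risingFac_zero_left hN]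

namespace IsPartOn

variable {α : Type*} {s : Finset α} {P : Finset (Finset α)} {B D : Finset α}

lemma of_exists_of_unique (hsub : ∀ B ∈ P, B ⊆ s) (hempty : ∅ ∉ P)
    (hex : ∀ a ∈ s, ∃ B ∈ P, a ∈ B)
    (huniq : ∀ B ∈ P, ∀ B' ∈ P, ∀ a ∈ B, a ∈ B' → B = B') : IsPartOn s P := by
  refine ⟨hsub, hempty, fun a ha => ?_⟩
  obtain ⟨B, hB, haB⟩ := hex a ha
  exact ⟨B, ⟨hB, haB⟩, fun B' hB' => huniq B' hB'.1 B hB a hB'.2 haB⟩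

lemma subset (h : IsPartOn s P) (hB : B ∈ P) : B ⊆ s := h.1 B hB

lemma nonempty (h : IsPartOn s P) (hB : B ∈ P) : B.Nonempty :=
  Finset.nonempty_iff_ne_empty.mpr fun he => h.2.1 (he ▸ hB)

lemma exists_mem (h : IsPartOn s P) {a : α} (ha : a ∈ s) : ∃ B ∈ P, a ∈ B := by
  obtain ⟨B, hB, -⟩ := h.2.2 a ha
  exact ⟨B, hB.1, hB.2⟩

lemma mem_unique (h : IsPartOn s P) {B B' : Finset α} (hB : B ∈ P) (hB' : B' ∈ P) {a : α}
    (ha : a ∈ B) (ha' : a ∈ B') : B = B' :=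
  (h.2.2 a (h.subset hB ha)).unique ⟨hB, ha⟩ ⟨hB', ha'⟩

lemma sum_card [DecidableEq α] (h : IsPartOn s P) : ∑ C ∈ P, C.card = s.card := by
  have hpair : (P : Set (Finset α)).PairwiseDisjoint id := by
    intro B hB B' hB' hne
    exact Finset.disjoint_left.mpr fun a ha ha' => hne (h.mem_unique hB hB' ha ha')
  have hcover : P.biUnion id = s := by
    ext a
    simp only [Finset.mem_biUnion, id]
    exact ⟨fun ⟨B, hB, ha⟩ => h.subset hB ha, h.exists_mem⟩
  simpa [hcover] using (Finset.card_biUnion hpair).symm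

lemma erase_block [DecidableEq α] (h : IsPartOn s P) (hB : B ∈ P) :
    IsPartOn (s \ B) (P.erase B) := by
  refine of_exists_of_unique (fun D hD a haD => ?_) (fun he => h.2.1 (Finset.mem_of_mem_erase he))
    (fun a ha => ?_) fun D hD D' hD' a ha ha' =>
      h.mem_unique (Finset.mem_of_mem_erase hD) (Finset.mem_of_mem_erase hD') ha ha'
  · obtain ⟨hDB, hD⟩ := Finset.mem_erase.mp hD
    exact Finset.mem_sdiff.mpr ⟨h.subset hD haD, fun haB => hDB (h.mem_unique hD hB haD haB)⟩
  · obtain ⟨has, haB⟩ := Finset.mem_sdiff.mp ha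
    obtain ⟨D, hD, haD⟩ := h.exists_mem has
    exact ⟨D, Finset.mem_erase.mpr ⟨fun hDB => haB (hDB ▸ haD), hD⟩, haD⟩

lemma insert_block [DecidableEq α] (h : IsPartOn s P) (hD : D.Nonempty) (hDs : Disjoint D s) :
    IsPartOn (s ∪ D) (insert D P) := by
  have hout : ∀ B ∈ P, ∀ a ∈ B, a ∉ D := fun B hB a haB haD =>
    Finset.disjoint_left.mp hDs haD (h.subset hB haB)
  refine of_exists_of_unique (fun B hB => ?_) (fun he => ?_) (fun a ha => ?_) ?_
  · rcases Finset.mem_insert.mp hB with rfl | hB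
    · exact Finset.subset_union_right
    · exact (h.subset hB).trans Finset.subset_union_left
  · rcases Finset.mem_insert.mp he with he | he
    · exact hD.ne_empty he.symm
    · exact h.2.1 he
  · rcases Finset.mem_union.mp ha with ha | ha
    · obtain ⟨B, hB, haB⟩ := h.exists_mem ha
      exact ⟨B, Finset.mem_insert_of_mem hB, haB⟩
    · exact ⟨D, Finset.mem_insert_self D P, ha⟩
  · intro B hB B' hB' a ha ha'
    rcases Finset.mem_insert.mp hB with rfl | hBP
    · rcases Finset.mem_insert.mp hB' with rfl | hBP'
      · rfl
      · exact absurd ha (hout B' hBP' a ha')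
    · rcases Finset.mem_insert.mp hB' with rfl | hBP'
      · exact absurd ha' (hout B hBP a ha)
      · exact h.mem_unique hBP hBP' ha ha'

end IsPartOn

lemma isPartOn_empty {α : Type*} : IsPartOn (∅ : Finset α) ∅ := by
  simp [IsPartOn]

section Restriction

variable {α : Type*} [DecidableEq α] {u s : Finset α} {ρ π : Finset (Finset α)}

lemma mem_restrictPart {B : Finset α} :
    B ∈ restrictPart ρ s ↔ B ≠ ∅ ∧ ∃ C ∈ ρ, C ∩ s = B := by
  simp [restrictPart]

lemma IsPartOn.restrict (hρ : IsPartOn u ρ) (hs : s ⊆ u) :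
    IsPartOn s (restrictPart ρ s) := by
  refine IsPartOn.of_exists_of_unique ?_ (fun he => (mem_restrictPart.mp he).1 rfl) ?_ ?_
  · intro B hB
    obtain ⟨-, C, -, rfl⟩ := mem_restrictPart.mp hB
    exact Finset.inter_subset_right
  · intro a ha
    obtain ⟨C, hC, haC⟩ := hρ.exists_mem (hs ha)
    have haCs : a ∈ C ∩ s := Finset.mem_inter.mpr ⟨haC, ha⟩
    exact ⟨C ∩ s, mem_restrictPart.mpr ⟨Finset.ne_empty_of_mem haCs, C, hC, rfl⟩, haCs⟩
  · intro B hB B' hB' a ha ha'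
    obtain ⟨-, C, hC, rfl⟩ := mem_restrictPart.mp hB
    obtain ⟨-, C', hC', rfl⟩ := mem_restrictPart.mp hB'
    rw [hρ.mem_unique hC hC' (Finset.mem_inter.mp ha).1 (Finset.mem_inter.mp ha').1]

def CompatibleOn (s : Finset α) (π ρ : Finset (Finset α)) : Prop :=
  ∀ C ∈ ρ, C ∩ s ∈ π ∨ C ∩ s = ∅

lemma CompatibleOn.insert_block {D : Finset α} (h : CompatibleOn s π ρ)
    (hD : D ∩ s ∈ π ∨ D ∩ s = ∅) : CompatibleOn s π (insert D ρ) := by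
  intro C hC
  rcases Finset.mem_insert.mp hC with rfl | hC
  exacts [hD, h C hC]

lemma CompatibleOn.erase_block {D : Finset α} (h : CompatibleOn s π ρ) :
    CompatibleOn s π (ρ.erase D) :=
  fun C hC => h C (Finset.mem_of_mem_erase hC)

lemma restrictPart_eq_iff (hρ : IsPartOn u ρ) (hπ : IsPartOn s π) (hs : s ⊆ u) :
    restrictPart ρ s = π ↔ CompatibleOn s π ρ := by
  constructor
  · rintro rfl C hC
    by_cases h : C ∩ s = ∅
    · exact Or.inr h
    · exact Or.inl (mem_restrictPart.mpr ⟨h, C, hC, rfl⟩)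
  · intro hcond
    ext B
    rw [mem_restrictPart]
    constructor
    · rintro ⟨hB, C, hC, rfl⟩
      exact (hcond C hC).resolve_right hB
    · intro hB
      obtain ⟨b, hb⟩ := hπ.nonempty hB
      obtain ⟨C, hC, hbC⟩ := hρ.exists_mem (hs (hπ.subset hB hb))
      have hbCs : b ∈ C ∩ s := Finset.mem_inter.mpr ⟨hbC, hπ.subset hB hb⟩
      have hCs : C ∩ s ∈ π := (hcond C hC).resolve_right (Finset.ne_empty_of_mem hbCs)
      exact ⟨Finset.ne_empty_of_mem hb, C, hC, hπ.mem_unique hCs hB hbCs hb⟩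

lemma IsPartOn.restrictPart_self (hρ : IsPartOn s ρ) : restrictPart ρ s = ρ := by
  ext B
  rw [mem_restrictPart]
  constructor
  · rintro ⟨-, C, hC, rfl⟩
    rwa [Finset.inter_eq_left.mpr (hρ.subset hC)]
  · exact fun hB =>
      ⟨(hρ.nonempty hB).ne_empty, B, hB, Finset.inter_eq_left.mpr (hρ.subset hB)⟩

end Restriction

section Extensions

variable {α : Type*} [DecidableEq α]

def blockOf (ρ : Finset (Finset α)) (B : Finset α) : Finset α :=
  (ρ.filter (B ⊆ ·)).sup id

lemma blockOf_eq {u B C : Finset α} {ρ : Finset (Finset α)} (hρ : IsPartOn u ρ)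
    (hB : B.Nonempty) (hC : C ∈ ρ) (hBC : B ⊆ C) : blockOf ρ B = C := by
  obtain ⟨b, hb⟩ := hB
  have : ρ.filter (B ⊆ ·) = {C} := by
    ext D
    simp only [Finset.mem_filter, Finset.mem_singleton]
    exact ⟨fun ⟨hD, hBD⟩ => hρ.mem_unique hD hC (hBD hb) (hBC hb),
      by rintro rfl; exact ⟨hC, hBC⟩⟩
  rw [blockOf, this, Finset.sup_singleton, id]

variable [Fintype α]

def partExtensions (s t : Finset α) (π : Finset (Finset α)) : Finset (Finset (Finset α)) :=
  Finset.univ.filter fun ρ => IsPartOn (s ∪ t) ρ ∧ CompatibleOn s π ρ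

lemma mem_partExtensions {s t : Finset α} {π ρ : Finset (Finset α)} :
    ρ ∈ partExtensions s t π ↔ IsPartOn (s ∪ t) ρ ∧ CompatibleOn s π ρ := by
  simp [partExtensions]

lemma partExtensions_empty {s : Finset α} {π : Finset (Finset α)} (hπ : IsPartOn s π) :
    partExtensions s ∅ π = {π} := by
  ext ρ
  rw [mem_partExtensions, Finset.union_empty, Finset.mem_singleton]
  constructor
  · rintro ⟨hρ, hcond⟩
    rw [← (restrictPart_eq_iff hρ hπ subset_rfl).mpr hcond, hρ.restrictPart_self]
  · rintro rfl
    exact ⟨hπ, (restrictPart_eq_iff hπ hπ subset_rfl).mp hπ.restrictPart_self⟩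

end Extensions

section InsertPoint

variable {α : Type*} [DecidableEq α]

lemma IsPartOn.insert_erase_empty {s D : Finset α} {P : Finset (Finset α)} (h : IsPartOn s P)
    (hDs : Disjoint D s) : IsPartOn (s ∪ D) ((insert D P).erase ∅) := by
  rcases D.eq_empty_or_nonempty with rfl | hD
  · rwa [Finset.union_empty, Finset.erase_insert_eq_erase, Finset.erase_eq_of_notMem h.2.1]
  · rw [Finset.erase_eq_of_notMem]
    · exact h.insert_block hD hDs
    · intro he
      rcases Finset.mem_insert.mp he with he | he
      exacts [hD.ne_empty he.symm, h.2.1 he]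

variable {u : Finset α} {a : α} {ρ : Finset (Finset α)}

lemma IsPartOn.join_point (h : IsPartOn u ρ) (ha : a ∉ u) {C : Finset α}
    (hC : C ∈ insert ∅ ρ) : IsPartOn (insert a u) (insert (insert a C) (ρ.erase C)) := by
  have hrest : IsPartOn (u \ C) (ρ.erase C) ∧ C ⊆ u := by
    rcases Finset.mem_insert.mp hC with rfl | hC
    · rw [Finset.sdiff_empty, Finset.erase_eq_of_notMem h.2.1]
      exact ⟨h, Finset.empty_subset u⟩
    · exact ⟨h.erase_block hC, h.subset hC⟩
  have hdisj : Disjoint (insert a C) (u \ C) :=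
    Finset.disjoint_insert_left.mpr
      ⟨fun h' => ha (Finset.mem_sdiff.mp h').1, Finset.disjoint_sdiff⟩
  have := hrest.1.insert_block (Finset.insert_nonempty a C) hdisj
  have hu : u \ C ∪ insert a C = insert a u := by
    ext x
    have := @hrest.2 x
    simp only [Finset.mem_union, Finset.mem_sdiff, Finset.mem_insert]
    tauto
  rwa [hu] at this

lemma IsPartOn.split_point (h : IsPartOn (insert a u) ρ) (ha : a ∉ u) {C : Finset α}
    (hC : C ∈ ρ) (haC : a ∈ C) : IsPartOn u ((insert (C.erase a) (ρ.erase C)).erase ∅) := by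
  have := (h.erase_block hC).insert_erase_empty
    (Finset.disjoint_sdiff.mono_left (Finset.erase_subset a C))
  have hCu := h.subset hC
  have hu : insert a u \ C ∪ C.erase a = u := by
    ext x
    have := @hCu x
    simp only [Finset.mem_union, Finset.mem_sdiff, Finset.mem_insert, Finset.mem_erase] at this ⊢
    grind
  rwa [hu] at this

end InsertPoint

section InsertPointSum

variable {α : Type*} [DecidableEq α] [Fintype α] {s t : Finset α} {π : Finset (Finset α)}
  {a : α}

lemma join_point_mem_partExtensions (hs : a ∉ s) (ht : a ∉ t) {ρ : Finset (Finset α)}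
    (hρ : ρ ∈ partExtensions s t π) {C : Finset α} (hC : C ∈ insert ∅ ρ) :
    insert (insert a C) (ρ.erase C) ∈ partExtensions s (insert a t) π := by
  obtain ⟨hpart, hcomp⟩ := mem_partExtensions.mp hρ
  rw [mem_partExtensions, Finset.union_insert]
  refine ⟨hpart.join_point (by simp [hs, ht]) hC, hcomp.erase_block.insert_block ?_⟩
  rw [Finset.insert_inter_of_notMem hs]
  rcases Finset.mem_insert.mp hC with rfl | hC
  exacts [Or.inr (Finset.empty_inter s), hcomp C hC]

lemma split_point_mem_partExtensions (hs : a ∉ s) (ht : a ∉ t) {ρ : Finset (Finset α)}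
    (hρ : ρ ∈ partExtensions s (insert a t) π) {C : Finset α} (hC : C ∈ ρ)
    (haC : a ∈ C) :
    (insert (C.erase a) (ρ.erase C)).erase ∅ ∈ partExtensions s t π ∧
      C.erase a ∈ insert ∅ ((insert (C.erase a) (ρ.erase C)).erase ∅) := by
  obtain ⟨hpart, hcomp⟩ := mem_partExtensions.mp hρ
  rw [Finset.union_insert] at hpart
  refine ⟨mem_partExtensions.mpr ⟨hpart.split_point (by simp [hs, ht]) hC haC,
    (hcomp.erase_block.insert_block ?_).erase_block⟩, ?_⟩
  · rw [Finset.erase_inter, Finset.erase_eq_of_notMem (fun h => hs (Finset.mem_inter.mp h).2)]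
    exact hcomp C hC
  · rcases (C.erase a).eq_empty_or_nonempty with h | h
    · exact h ▸ Finset.mem_insert_self _ _
    · exact Finset.mem_insert_of_mem (Finset.mem_erase.mpr ⟨h.ne_empty,
        Finset.mem_insert_self _ _⟩)

lemma sum_partExtensions_insert (hs : a ∉ s) (ht : a ∉ t) (F : Finset (Finset α) → ℝ) :
    ∑ ρ ∈ partExtensions s (insert a t) π, F ρ =
      ∑ ρ ∈ partExtensions s t π,
        ∑ C ∈ insert ∅ ρ, F (insert (insert a C) (ρ.erase C)) := by
  have hst : a ∉ s ∪ t := by simp [hs, ht]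
  have hblock : ∀ ρ ∈ partExtensions s (insert a t) π,
      blockOf ρ {a} ∈ ρ ∧ a ∈ blockOf ρ {a} := by
    intro ρ hρ
    have hpart := (mem_partExtensions.mp hρ).1
    obtain ⟨C, hC, haC⟩ := hpart.exists_mem (by simp : a ∈ s ∪ insert a t)
    rw [blockOf_eq hpart (Finset.singleton_nonempty a) hC (Finset.singleton_subset_iff.mpr haC)]
    exact ⟨hC, haC⟩
  rw [Finset.sum_sigma']
  -- `a` joins the block `C` of `ρ`, or opens a singleton when `C = ∅`
  refine (Finset.sum_nbij'
    (fun p : (_ : Finset (Finset α)) × Finset α => insert (insert a p.2) (p.1.erase p.2))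
    (fun ρ => (⟨(insert ((blockOf ρ {a}).erase a) (ρ.erase (blockOf ρ {a}))).erase ∅,
      (blockOf ρ {a}).erase a⟩ : (_ : Finset (Finset α)) × Finset α)) ?_ ?_ ?_ ?_
    fun _ _ => rfl).symm
  · rintro ⟨ρ, C⟩ hp
    obtain ⟨hρ, hC⟩ := Finset.mem_sigma.mp hp
    exact join_point_mem_partExtensions hs ht hρ hC
  · intro ρ hρ
    exact Finset.mem_sigma.mpr (split_point_mem_partExtensions hs ht hρ (hblock ρ hρ).1
      (hblock ρ hρ).2)
  · rintro ⟨ρ, C⟩ hp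
    obtain ⟨hρ, hC⟩ := Finset.mem_sigma.mp hp
    have hpart := (mem_partExtensions.mp hρ).1
    have haC : a ∉ C := by
      rcases Finset.mem_insert.mp hC with rfl | hC
      exacts [Finset.notMem_empty a, fun h => hst (hpart.subset hC h)]
    have hnew : insert a C ∉ ρ.erase C := fun h =>
      hst (hpart.subset (Finset.mem_of_mem_erase h) (Finset.mem_insert_self a C))
    have hjoin : blockOf (insert (insert a C) (ρ.erase C)) {a} = insert a C :=
      blockOf_eq (hpart.join_point hst hC) (Finset.singleton_nonempty a)
        (Finset.mem_insert_self _ _) (by simp)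
    have hback : (insert C (ρ.erase C)).erase ∅ = ρ := by
      rcases Finset.mem_insert.mp hC with rfl | hC
      · rw [Finset.erase_insert_eq_erase, Finset.erase_idem,
          Finset.erase_eq_of_notMem hpart.2.1]
      · rw [Finset.insert_erase hC, Finset.erase_eq_of_notMem hpart.2.1]
    simp only [hjoin, Finset.erase_insert haC, Finset.erase_insert hnew, hback]
  · intro ρ hρ
    obtain ⟨hC, haC⟩ := hblock ρ hρ
    set C := blockOf ρ {a}
    have hpart := (mem_partExtensions.mp hρ).1
    have hnot : C.erase a ∉ ρ.erase C := by
      intro h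
      obtain ⟨hne, hmem⟩ := Finset.mem_erase.mp h
      obtain ⟨b, hb⟩ := hpart.nonempty hmem
      exact hne (hpart.mem_unique hmem hC hb (Finset.mem_of_mem_erase hb))
    simp only
    rw [Finset.insert_erase haC, Finset.erase_right_comm, Finset.erase_insert hnot,
      Finset.erase_eq_of_notMem (fun h => hpart.2.1 (Finset.mem_of_mem_erase h)),
      Finset.insert_erase hC]

end InsertPointSum

lemma sum_genStirling_succ (σ γ : ℝ) (M : ℕ) (g : ℕ → ℝ) :
    ∑ k ∈ Finset.range (M + 2), g k * genStirling σ γ (M + 1) k =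
      ∑ k ∈ Finset.range (M + 1),
        (g (k + 1) + ((M : ℝ) - k * σ - γ) * g k) * genStirling σ γ M k := by
  have hlast : genStirling σ γ M (M + 1) = 0 :=
    genStirling_eq_zero_of_lt σ γ (Nat.lt_succ_self M)
  rw [Finset.sum_range_succ' _ (M + 1)]
  simp only [genStirling, mul_add, add_mul, Finset.sum_add_distrib]
  rw [add_assoc]
  congr 1
  rw [Finset.sum_range_succ _ M, hlast, mul_zero, mul_zero, add_zero, Finset.sum_range_succ' _ M]
  congr 1
  · exact Finset.sum_congr rfl fun k _ => by push_cast; ring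
  · push_cast; ring

lemma mem_partsJOf {α : Type*} [Fintype α] {s : Finset α} {j : ℕ} {π : Finset (Finset α)} :
    π ∈ partsJOf s j ↔ IsPartOn s π ∧ π.card = j := by
  simp [partsJOf]

section Weights

variable {α : Type*} [DecidableEq α]

def partWeight (σ : ℝ) (ρ : Finset (Finset α)) : ℝ :=
  ∏ C ∈ ρ, risingFac (1 - σ) (C.card - 1)

lemma sum_join_point_partWeight (σ : ℝ) {u : Finset α} {ρ : Finset (Finset α)}
    (hρ : IsPartOn u ρ) {a : α} (ha : a ∉ u) (g : ℕ → ℝ) :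
    ∑ C ∈ insert ∅ ρ, g (insert (insert a C) (ρ.erase C)).card *
        partWeight σ (insert (insert a C) (ρ.erase C)) =
      (g (ρ.card + 1) + ((u.card : ℝ) - ρ.card * σ) * g ρ.card) * partWeight σ ρ := by
  have hout : ∀ C ∈ ρ, a ∉ C := fun C hC h => ha (hρ.subset hC h)
  have hjoin : ∀ C ∈ ρ, g (insert (insert a C) (ρ.erase C)).card *
      partWeight σ (insert (insert a C) (ρ.erase C)) =
        ((C.card : ℝ) - σ) * (g ρ.card * partWeight σ ρ) := by
    intro C hC
    have hnew : insert a C ∉ ρ.erase C := fun h =>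
      hout _ (Finset.mem_of_mem_erase h) (Finset.mem_insert_self a C)
    have hpos : 0 < C.card := (hρ.nonempty hC).card_pos
    have hgrow : risingFac (1 - σ) ((insert a C).card - 1) =
        risingFac (1 - σ) (C.card - 1) * ((C.card : ℝ) - σ) := by
      rw [Finset.card_insert_of_notMem (hout C hC), Nat.add_sub_cancel,
        ← Nat.sub_add_cancel hpos, risingFac_succ, Nat.sub_add_cancel hpos, Nat.cast_sub hpos]
      push_cast
      ring
    rw [Finset.card_insert_of_notMem hnew, Finset.card_erase_add_one hC, partWeight,
      Finset.prod_insert hnew, hgrow, partWeight, ← Finset.mul_prod_erase ρ _ hC]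
    ring
  have hsingle : insert {a} ρ = insert (insert a ∅) (ρ.erase ∅) := by
    rw [Finset.erase_eq_of_notMem hρ.2.1, Finset.insert_empty]
  have hsum : ∑ C ∈ ρ, ((C.card : ℝ) - σ) = (u.card : ℝ) - ρ.card * σ := by
    rw [Finset.sum_sub_distrib, Finset.sum_const, nsmul_eq_mul, ← hρ.sum_card]
    push_cast
    ring
  have ha' : {a} ∉ ρ := fun h => hout _ h (Finset.mem_singleton_self a)
  rw [Finset.sum_insert hρ.2.1, ← hsingle, Finset.sum_congr rfl hjoin, ← Finset.sum_mul, hsum,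
    Finset.card_insert_of_notMem ha', partWeight, Finset.prod_insert ha']
  simp only [Finset.card_singleton, Nat.sub_self, risingFac_zero, one_mul, partWeight]
  ring

variable [Fintype α]

lemma sum_partExtensions_partWeight (σ : ℝ) (t : Finset α) {s : Finset α}
    {π : Finset (Finset α)} (hπ : IsPartOn s π) (hst : Disjoint s t) (g : ℕ → ℝ) :
    ∑ ρ ∈ partExtensions s t π, g ρ.card * partWeight σ ρ =
      partWeight σ π * ∑ k ∈ Finset.range (t.card + 1),
        g (π.card + k) * genStirling σ (π.card * σ - s.card) t.card k := by
  induction t using Finset.cons_induction generalizing g with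
  | empty => simp [partExtensions_empty hπ, genStirling, mul_comm]
  | cons a t ha ih =>
    have hst' : Disjoint s t := hst.mono_right (Finset.subset_cons ha)
    have has : a ∉ s := fun h => Finset.disjoint_left.mp hst h (Finset.mem_cons_self a t)
    rw [Finset.cons_eq_insert, sum_partExtensions_insert has ha]
    rw [Finset.sum_congr rfl fun ρ hρ => sum_join_point_partWeight σ
      (mem_partExtensions.mp hρ).1 (by simp [has, ha]) g]
    rw [ih hst' fun c => g (c + 1) + (((s ∪ t).card : ℝ) - c * σ) * g c,
      Finset.card_insert_of_notMem ha, sum_genStirling_succ, Finset.card_union_of_disjoint hst']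
    congr 1
    refine Finset.sum_congr rfl fun k _ => ?_
    push_cast
    ring_nf

lemma sum_partsJOf_partWeight (σ : ℝ) (u : Finset α) (j : ℕ) :
    ∑ π ∈ partsJOf u j, partWeight σ π = genStirling σ 0 u.card j := by
  have hparts : partsJOf u j = (partExtensions ∅ u ∅).filter (·.card = j) := by
    ext ρ
    simp [partsJOf, mem_partExtensions, CompatibleOn]
  have h := sum_partExtensions_partWeight σ u isPartOn_empty (Finset.disjoint_empty_left u)
    (fun c => if c = j then 1 else 0)
  simp only [ite_mul, one_mul, zero_mul] at h
  rw [hparts, Finset.sum_filter, h]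
  simp only [partWeight, Finset.prod_empty, Finset.card_empty, zero_add, one_mul, Nat.cast_zero,
    zero_mul, sub_zero, Finset.sum_ite_eq', Finset.mem_range]
  split_ifs with hj
  · rfl
  · rw [genStirling_eq_zero_of_lt σ 0 (by omega)]

lemma sum_partsJOf_gibbsW (σ : ℝ) (VN : ℕ → ℝ) (u : Finset α) (j : ℕ) :
    ∑ π ∈ partsJOf u j, gibbsW σ VN π = VN j * genStirling σ 0 u.card j := by
  rw [← sum_partsJOf_partWeight, Finset.mul_sum]
  exact Finset.sum_congr rfl fun π hπ => by rw [gibbsW, (mem_partsJOf.mp hπ).2, partWeight]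

end Weights

section BlockSplit

variable {α : Type*} [DecidableEq α] {s t B : Finset α} {π : Finset (Finset α)}

def ReobservedWithFreq (s : Finset α) (l : ℕ) (ρ : Finset (Finset α)) (B : Finset α) : Prop :=
  ∃ C ∈ ρ, B ⊆ C ∧ (C \ s).card = l

lemma CompatibleOn.inter_eq_of_subset (hπ : IsPartOn s π) {ρ : Finset (Finset α)}
    (hcomp : CompatibleOn s π ρ) {C : Finset α} (hC : C ∈ ρ) (hB : B ∈ π) (hBC : B ⊆ C) :
    C ∩ s = B := by
  obtain ⟨b, hb⟩ := hπ.nonempty hB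
  have hbC : b ∈ C ∩ s := Finset.mem_inter.mpr ⟨hBC hb, hπ.subset hB hb⟩
  exact hπ.mem_unique ((hcomp C hC).resolve_right (Finset.ne_empty_of_mem hbC)) hB hbC hb

variable [Fintype α]

lemma join_block_mem_partExtensions (hπ : IsPartOn s π) (hst : Disjoint s t) (hB : B ∈ π)
    {L : Finset α} (hL : L ⊆ t) {ρ : Finset (Finset α)}
    (hρ : ρ ∈ partExtensions (s \ B) (t \ L) (π.erase B)) :
    insert (B ∪ L) ρ ∈ partExtensions s t π := by
  obtain ⟨hpart, hcomp⟩ := mem_partExtensions.mp hρ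
  have hBs := hπ.subset hB
  have hdisj : Disjoint (B ∪ L) (s \ B ∪ t \ L) := by
    rw [Finset.disjoint_left]
    intro x hx hx'
    have := Finset.disjoint_left.mp hst
    have := @hBs x
    have := @hL x
    simp only [Finset.mem_union, Finset.mem_sdiff] at hx hx' ⊢
    tauto
  have hunion : s \ B ∪ t \ L ∪ (B ∪ L) = s ∪ t := by
    ext x
    have := @hBs x
    have := @hL x
    simp only [Finset.mem_union, Finset.mem_sdiff]
    tauto
  have hBL : (B ∪ L) ∩ s = B := by
    rw [Finset.union_inter_distrib_right, Finset.inter_eq_left.mpr hBs,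
      Finset.disjoint_iff_inter_eq_empty.mp ((hst.mono_right hL).symm), Finset.union_empty]
  refine mem_partExtensions.mpr ⟨hunion ▸ hpart.insert_block
    ((hπ.nonempty hB).mono Finset.subset_union_left) hdisj, fun D hD => ?_⟩
  rcases Finset.mem_insert.mp hD with hD | hD
  · rw [hD, hBL]
    exact Or.inl hB
  · have hDu := hpart.subset hD
    have hDs : D ∩ s = D ∩ (s \ B) := by
      ext x
      have : x ∈ D → x ∉ B := fun hxD hxB =>
        Finset.disjoint_left.mp hdisj (Finset.mem_union_left L hxB) (hDu hxD)
      simp only [Finset.mem_inter, Finset.mem_sdiff]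
      tauto
    rw [hDs]
    exact (hcomp D hD).imp_left Finset.mem_of_mem_erase

lemma split_block_mem_partExtensions (hπ : IsPartOn s π) (hst : Disjoint s t) (hB : B ∈ π)
    {ρ : Finset (Finset α)} (hρ : ρ ∈ partExtensions s t π) {C : Finset α} (hC : C ∈ ρ)
    (hBC : B ⊆ C) : ρ.erase C ∈ partExtensions (s \ B) (t \ (C \ s)) (π.erase B) := by
  obtain ⟨hpart, hcomp⟩ := mem_partExtensions.mp hρ
  have hCs := hcomp.inter_eq_of_subset hπ hC hB hBC
  have hCu := hpart.subset hC
  have hrest : (s ∪ t) \ C = s \ B ∪ t \ (C \ s) := by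
    ext x
    have h1 : x ∈ C ∧ x ∈ s ↔ x ∈ B := by rw [← Finset.mem_inter, hCs]
    have h2 := @hCu x
    have h3 : x ∈ s → x ∉ t := fun h => Finset.disjoint_left.mp hst h
    simp only [Finset.mem_union, Finset.mem_sdiff] at h2 ⊢
    tauto
  refine mem_partExtensions.mpr ⟨hrest ▸ hpart.erase_block hC, fun D hD => ?_⟩
  obtain ⟨hDC, hD⟩ := Finset.mem_erase.mp hD
  have hDB : Disjoint D B := Finset.disjoint_left.mpr fun x hxD hxB =>
    hDC (hpart.mem_unique hD hC hxD (hBC hxB))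
  have hDs : D ∩ (s \ B) = D ∩ s := by
    rw [← Finset.inter_sdiff_assoc, Finset.sdiff_eq_self_of_disjoint
      (Finset.disjoint_of_subset_left Finset.inter_subset_left hDB)]
  rw [hDs]
  refine (hcomp D hD).imp_left fun h => Finset.mem_erase.mpr ⟨fun hDsB => ?_, h⟩
  obtain ⟨b, hb⟩ := hπ.nonempty hB
  exact Finset.disjoint_left.mp hDB (Finset.mem_inter.mp (hDsB ▸ hb : b ∈ D ∩ s)).1 hb

lemma union_notMem_of_mem_partExtensions (hst : Disjoint s t) (hBs : B ⊆ s) (hB : B.Nonempty)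
    (L : Finset α) {π' ρ : Finset (Finset α)}
    (hρ : ρ ∈ partExtensions (s \ B) (t \ L) π') :
    B ∪ L ∉ ρ := by
  intro h
  obtain ⟨b, hb⟩ := hB
  have := (mem_partExtensions.mp hρ).1.subset h (Finset.mem_union_left L hb)
  simp only [Finset.mem_union, Finset.mem_sdiff] at this
  exact this.elim (fun h' => h'.2 hb) fun h' => Finset.disjoint_left.mp hst (hBs hb) h'.1

lemma sum_partExtensions_filter_block (hπ : IsPartOn s π) (hst : Disjoint s t) (hB : B ∈ π)
    (l : ℕ) (F : Finset (Finset α) → ℝ) :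
    ∑ ρ ∈ (partExtensions s t π).filter (ReobservedWithFreq s l · B), F ρ =
      ∑ L ∈ t.powersetCard l, ∑ ρ ∈ partExtensions (s \ B) (t \ L) (π.erase B),
        F (insert (B ∪ L) ρ) := by
  obtain ⟨b, hb⟩ := hπ.nonempty hB
  have hBs := hπ.subset hB
  have hblock : ∀ ρ ∈ (partExtensions s t π).filter (ReobservedWithFreq s l · B),
      blockOf ρ B ∈ ρ ∧ B ⊆ blockOf ρ B ∧ (blockOf ρ B \ s).card = l := by
    intro ρ hρ
    obtain ⟨hρ, C, hC, hBC, hl⟩ := Finset.mem_filter.mp hρ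
    rw [blockOf_eq (mem_partExtensions.mp hρ).1 ⟨b, hb⟩ hC hBC]
    exact ⟨hC, hBC, hl⟩
  have hdiff : ∀ L ⊆ t, (B ∪ L) \ s = L := fun L hL => by
    rw [Finset.union_sdiff_distrib, Finset.sdiff_eq_empty_iff_subset.mpr hBs, Finset.empty_union,
      Finset.sdiff_eq_self_of_disjoint (hst.mono_right hL).symm]
  rw [Finset.sum_sigma']
  refine (Finset.sum_nbij'
    (fun p : (_ : Finset α) × Finset (Finset α) => insert (B ∪ p.1) p.2)
    (fun ρ =>
      (⟨blockOf ρ B \ s, ρ.erase (blockOf ρ B)⟩ : (_ : Finset α) × Finset (Finset α)))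
    ?_ ?_ ?_ ?_ fun _ _ => rfl).symm
  · rintro ⟨L, ρ⟩ hp
    obtain ⟨hL, hρ⟩ := Finset.mem_sigma.mp hp
    obtain ⟨hLt, hLl⟩ := Finset.mem_powersetCard.mp hL
    refine Finset.mem_filter.mpr ⟨join_block_mem_partExtensions hπ hst hB hLt hρ,
      B ∪ L, Finset.mem_insert_self _ _, Finset.subset_union_left, ?_⟩
    rw [hdiff L hLt, hLl]
  · intro ρ hρ
    obtain ⟨hC, hBC, hl⟩ := hblock ρ hρ
    have hρ' := (Finset.mem_filter.mp hρ).1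
    have hCt : blockOf ρ B \ s ⊆ t := fun x hx => by
      obtain ⟨hxC, hxs⟩ := Finset.mem_sdiff.mp hx
      exact (Finset.mem_union.mp ((mem_partExtensions.mp hρ').1.subset hC hxC)).resolve_left hxs
    exact Finset.mem_sigma.mpr ⟨Finset.mem_powersetCard.mpr ⟨hCt, hl⟩,
      split_block_mem_partExtensions hπ hst hB hρ' hC hBC⟩
  · rintro ⟨L, ρ⟩ hp
    obtain ⟨hL, hρ⟩ := Finset.mem_sigma.mp hp
    have hLt := (Finset.mem_powersetCard.mp hL).1
    have hjoin := join_block_mem_partExtensions hπ hst hB hLt hρ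
    have hBL : blockOf (insert (B ∪ L) ρ) B = B ∪ L :=
      blockOf_eq (mem_partExtensions.mp hjoin).1 ⟨b, hb⟩ (Finset.mem_insert_self _ _)
        Finset.subset_union_left
    simp only [hBL, hdiff L hLt,
      Finset.erase_insert (union_notMem_of_mem_partExtensions hst hBs ⟨b, hb⟩ L hρ)]
  · intro ρ hρ
    obtain ⟨hC, hBC, -⟩ := hblock ρ hρ
    obtain ⟨-, hcomp⟩ := mem_partExtensions.mp (Finset.mem_filter.mp hρ).1
    have hCs := hcomp.inter_eq_of_subset hπ hC hB hBC
    have hCB : B ∪ blockOf ρ B \ s = blockOf ρ B := by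
      nth_rewrite 1 [← hCs]
      rw [Finset.union_comm, Finset.sdiff_union_inter]
    simp only [hCB, Finset.insert_erase hC]

end BlockSplit

section BlockFrequency

variable {α : Type*} [DecidableEq α] [Fintype α]

lemma sum_partExtensions_block_freq (σ : ℝ) {s t B : Finset α} {π : Finset (Finset α)}
    (hπ : IsPartOn s π) (hst : Disjoint s t) (hB : B ∈ π) (l : ℕ) (g : ℕ → ℝ) :
    ∑ ρ ∈ (partExtensions s t π).filter (ReobservedWithFreq s l · B),
        g ρ.card * partWeight σ ρ =
      (t.card.choose l : ℝ) * risingFac (1 - σ) (B.card + l - 1) * partWeight σ (π.erase B) *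
        ∑ k ∈ Finset.range (t.card - l + 1), g (π.card + k) *
          genStirling σ (((π.card - 1 : ℕ) : ℝ) * σ - ((s.card - B.card : ℕ) : ℝ))
            (t.card - l) k := by
  have hBs := hπ.subset hB
  have hπB := hπ.erase_block hB
  rw [sum_partExtensions_filter_block hπ hst hB l, ← Finset.card_powersetCard l t,
    ← nsmul_eq_mul, ← Finset.sum_const, Finset.sum_mul, Finset.sum_mul]
  refine Finset.sum_congr rfl fun L hL => ?_
  obtain ⟨hLt, hLl⟩ := Finset.mem_powersetCard.mp hL
  have hjoin : ∀ ρ ∈ partExtensions (s \ B) (t \ L) (π.erase B),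
      g (insert (B ∪ L) ρ).card * partWeight σ (insert (B ∪ L) ρ) =
        (fun c => g (c + 1) * risingFac (1 - σ) (B.card + l - 1)) ρ.card * partWeight σ ρ := by
    intro ρ hρ
    have hout := union_notMem_of_mem_partExtensions hst hBs (hπ.nonempty hB) L hρ
    rw [Finset.card_insert_of_notMem hout, partWeight, Finset.prod_insert hout,
      Finset.card_union_of_disjoint (hst.mono hBs hLt), hLl, partWeight]
    ring
  rw [Finset.sum_congr rfl hjoin, sum_partExtensions_partWeight σ (t \ L) hπB
    (hst.mono Finset.sdiff_subset Finset.sdiff_subset)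
    (fun c => g (c + 1) * risingFac (1 - σ) (B.card + l - 1)), Finset.mul_sum, Finset.mul_sum]
  rw [Finset.card_sdiff_of_subset hLt, hLl, Finset.card_sdiff_of_subset hBs,
    Finset.card_erase_of_mem hB]
  refine Finset.sum_congr rfl fun k _ => ?_
  rw [show π.card - 1 + k + 1 = π.card + k by have := Finset.card_pos.mpr ⟨B, hB⟩; omega]
  ring

end BlockFrequency

lemma sum_powerset_nonempty {α : Type*} (s : Finset α) (f : Finset α → ℝ) :
    ∑ B ∈ s.powerset.filter Finset.Nonempty, f B =
      ∑ i ∈ Finset.Icc 1 s.card, ∑ B ∈ s.powersetCard i, f B := by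
  refine (Finset.sum_fiberwise_of_maps_to (g := Finset.card) (t := Finset.Icc 1 s.card)
    (fun B hB => ?_) f).symm.trans ?_
  · obtain ⟨hBs, hBne⟩ := Finset.mem_filter.mp hB
    exact Finset.mem_Icc.mpr ⟨hBne.card_pos, Finset.card_le_card (Finset.mem_powerset.mp hBs)⟩
  · refine Finset.sum_congr rfl fun i hi => Finset.sum_congr ?_ fun _ _ => rfl
    ext B
    simp only [Finset.mem_filter, Finset.mem_powerset, Finset.mem_powersetCard,
      ← Finset.card_pos]
    have := (Finset.mem_Icc.mp hi).1
    constructor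
    · exact fun h => ⟨h.1.1, h.2⟩
    · exact fun h => ⟨⟨h.1, by omega⟩, h.2⟩

section BlockChoice

variable {α : Type*} [DecidableEq α] [Fintype α]

lemma sum_partsJOf_sum_erase (s : Finset α) {j : ℕ} (hj : 1 ≤ j)
    (Φ : Finset α → Finset (Finset α) → ℝ) :
    ∑ π ∈ partsJOf s j, ∑ B ∈ π, Φ B (π.erase B) =
      ∑ B ∈ s.powerset.filter Finset.Nonempty,
        ∑ π ∈ partsJOf (s \ B) (j - 1), Φ B π := by
  have hnot : ∀ B ∈ s.powerset.filter Finset.Nonempty, ∀ π ∈ partsJOf (s \ B) (j - 1),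
      B ∉ π := by
    intro B hB π hπ hBπ
    obtain ⟨b, hb⟩ := (Finset.mem_filter.mp hB).2
    exact (Finset.mem_sdiff.mp ((mem_partsJOf.mp hπ).1.subset hBπ hb)).2 hb
  rw [Finset.sum_sigma', Finset.sum_sigma']
  refine Finset.sum_nbij'
    (fun p => (⟨p.2, p.1.erase p.2⟩ : (_ : Finset α) × Finset (Finset α)))
    (fun q => (⟨insert q.1 q.2, q.1⟩ : (_ : Finset (Finset α)) × Finset α)) ?_ ?_ ?_ ?_
    fun _ _ => rfl
  · rintro ⟨π, B⟩ hp
    obtain ⟨hπ, hB⟩ := Finset.mem_sigma.mp hp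
    obtain ⟨hpart, hcard⟩ := mem_partsJOf.mp hπ
    refine Finset.mem_sigma.mpr ⟨Finset.mem_filter.mpr ⟨Finset.mem_powerset.mpr
      (hpart.subset hB), hpart.nonempty hB⟩, mem_partsJOf.mpr ⟨hpart.erase_block hB, ?_⟩⟩
    rw [Finset.card_erase_of_mem hB, hcard]
  · rintro ⟨B, π⟩ hq
    obtain ⟨hB, hπ⟩ := Finset.mem_sigma.mp hq
    obtain ⟨hBs, hBne⟩ := Finset.mem_filter.mp hB
    obtain ⟨hpart, hcard⟩ := mem_partsJOf.mp hπ
    have hins := hpart.insert_block hBne Finset.disjoint_sdiff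
    rw [Finset.sdiff_union_of_subset (Finset.mem_powerset.mp hBs)] at hins
    refine Finset.mem_sigma.mpr ⟨mem_partsJOf.mpr ⟨hins, ?_⟩, Finset.mem_insert_self B π⟩
    rw [Finset.card_insert_of_notMem (hnot B hB π hπ), hcard]
    omega
  · rintro ⟨π, B⟩ hp
    simp only [Finset.insert_erase (Finset.mem_sigma.mp hp).2]
  · rintro ⟨B, π⟩ hq
    obtain ⟨hB, hπ⟩ := Finset.mem_sigma.mp hq
    simp only [Finset.erase_insert (hnot B hB π hπ)]

end BlockChoice

section Numerator

variable {α : Type*} [DecidableEq α] [Fintype α]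

lemma sum_partsJOf_sum_partExtensions_freq (σ : ℝ) {s t : Finset α} (hst : Disjoint s t)
    {j : ℕ} (hj : 1 ≤ j) (l : ℕ) (g : ℕ → ℝ) :
    ∑ π ∈ partsJOf s j, ∑ ρ ∈ partExtensions s t π,
        ((π.filter (ReobservedWithFreq s l ρ)).card : ℝ) *
          (g ρ.card * partWeight σ ρ) =
      (t.card.choose l : ℝ) * ∑ i ∈ Finset.Icc 1 s.card, (s.card.choose i : ℝ) *
        risingFac (1 - σ) (i + l - 1) * genStirling σ 0 (s.card - i) (j - 1) *
          ∑ k ∈ Finset.range (t.card - l + 1), g (j + k) *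
            genStirling σ (-(s.card : ℝ) + i + ((j : ℝ) - 1) * σ) (t.card - l) k := by
  set G : ℕ → ℝ := fun i => ∑ k ∈ Finset.range (t.card - l + 1), g (j + k) *
    genStirling σ (-(s.card : ℝ) + i + ((j : ℝ) - 1) * σ) (t.card - l) k
  have hblocks : ∀ π ∈ partsJOf s j, ∑ ρ ∈ partExtensions s t π,
      ((π.filter (ReobservedWithFreq s l ρ)).card : ℝ) *
        (g ρ.card * partWeight σ ρ) =
      ∑ B ∈ π, (t.card.choose l : ℝ) * risingFac (1 - σ) (B.card + l - 1) *
        partWeight σ (π.erase B) * G B.card := by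
    intro π hπ
    obtain ⟨hpart, hcard⟩ := mem_partsJOf.mp hπ
    simp only [Finset.card_filter, Nat.cast_sum, Nat.cast_ite, Nat.cast_one, Nat.cast_zero,
      Finset.sum_mul, ite_mul, one_mul, zero_mul]
    rw [Finset.sum_comm]
    refine Finset.sum_congr rfl fun B hB => ?_
    have hBs : B.card ≤ s.card := Finset.card_le_card (hpart.subset hB)
    rw [← Finset.sum_filter, sum_partExtensions_block_freq σ hpart hst hB l g, hcard]
    congr 1
    refine Finset.sum_congr rfl fun k _ => ?_
    push_cast [Nat.cast_sub hj, Nat.cast_sub hBs]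
    ring_nf
  rw [Finset.sum_congr rfl hblocks, sum_partsJOf_sum_erase s hj
    (fun B π => (t.card.choose l : ℝ) * risingFac (1 - σ) (B.card + l - 1) *
      partWeight σ π * G B.card), sum_powerset_nonempty, Finset.mul_sum]
  refine Finset.sum_congr rfl fun i _ => ?_
  have hB : ∀ B ∈ s.powersetCard i, ∑ π ∈ partsJOf (s \ B) (j - 1),
      (t.card.choose l : ℝ) * risingFac (1 - σ) (B.card + l - 1) * partWeight σ π * G B.card =
      (t.card.choose l : ℝ) * (risingFac (1 - σ) (i + l - 1) *
        genStirling σ 0 (s.card - i) (j - 1) * G i) := by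
    intro B hB
    obtain ⟨hBs, rfl⟩ := Finset.mem_powersetCard.mp hB
    rw [← Finset.sum_mul, ← Finset.mul_sum, sum_partsJOf_partWeight,
      Finset.card_sdiff_of_subset hBs]
    ring
  rw [Finset.sum_congr rfl hB, Finset.sum_const, Finset.card_powersetCard, nsmul_eq_mul]
  ring

end Numerator

lemma sum_partitions_eq_sum_partsJOf_sum_partExtensions {α : Type*} [DecidableEq α] [Fintype α]
    (s : Finset α) (j : ℕ) (f : Finset (Finset α) → Finset (Finset α) → ℝ) :
    ∑ ρ ∈ Finset.univ.filter
        (fun ρ => IsPartOn Finset.univ ρ ∧ (restrictPart ρ s).card = j),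
        f (restrictPart ρ s) ρ =
      ∑ π ∈ partsJOf s j, ∑ ρ ∈ partExtensions s sᶜ π, f π ρ := by
  rw [← Finset.sum_fiberwise_of_maps_to (g := (restrictPart · s)) (t := partsJOf s j)]
  · refine Finset.sum_congr rfl fun π hπ => ?_
    have hfiber : (Finset.univ.filter fun ρ => IsPartOn Finset.univ ρ ∧
        (restrictPart ρ s).card = j).filter (restrictPart · s = π) =
          partExtensions s sᶜ π := by
      ext ρ
      simp only [Finset.mem_filter, Finset.mem_univ, true_and, mem_partExtensions,
        Finset.union_compl]
      constructor
      · rintro ⟨⟨hρ, -⟩, rfl⟩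
        exact ⟨hρ, (restrictPart_eq_iff hρ (hρ.restrict s.subset_univ) s.subset_univ).mp rfl⟩
      · rintro ⟨hρ, hcomp⟩
        have := (restrictPart_eq_iff hρ (mem_partsJOf.mp hπ).1 s.subset_univ).mpr hcomp
        exact ⟨⟨hρ, this ▸ (mem_partsJOf.mp hπ).2⟩, this⟩
    rw [← hfiber]
    exact Finset.sum_congr rfl fun ρ hρ => by rw [(Finset.mem_filter.mp hρ).2]
  · intro ρ hρ
    obtain ⟨hρ, hcard⟩ := (Finset.mem_filter.mp hρ).2
    exact mem_partsJOf.mpr ⟨hρ.restrict s.subset_univ, hcard⟩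

lemma Rlcnt_eq_card_filter (n m l : ℕ) (ρ : Finset (Finset (Fin (n + m)))) :
    Rlcnt n m l ρ =
      ((restrictPart ρ (oldSet n m)).filter (ReobservedWithFreq (oldSet n m) l ρ)).card := by
  unfold Rlcnt ReobservedWithFreq
  congr

lemma card_oldSet (n m : ℕ) : (oldSet n m).card = n := by
  rw [oldSet, Fin.card_filter_val_lt]
  omega

lemma sum_withJ_Rlcnt_mul_gibbsW (n m j : ℕ) (hj : 1 ≤ j) (l : ℕ) (σ : ℝ)
    (VN : ℕ → ℝ) :
    ∑ ρ ∈ withJ n m j, (Rlcnt n m l ρ : ℝ) * gibbsW σ VN ρ =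
      (m.choose l : ℝ) * ∑ i ∈ Finset.Icc 1 n, (n.choose i : ℝ) *
        risingFac (1 - σ) (i + l - 1) * genStirling σ 0 (n - i) (j - 1) *
          ∑ k ∈ Finset.range (m - l + 1), VN (j + k) *
            genStirling σ (-(n : ℝ) + i + ((j : ℝ) - 1) * σ) (m - l) k := by
  have hnew : (oldSet n m)ᶜ.card = m := by
    rw [Finset.card_compl, card_oldSet, Fintype.card_fin, Nat.add_sub_cancel_left]
  have h := sum_partsJOf_sum_partExtensions_freq σ
    (disjoint_compl_right : Disjoint (oldSet n m) _) hj l VN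
  rw [card_oldSet, hnew] at h
  simp only [Rlcnt_eq_card_filter]
  exact (sum_partitions_eq_sum_partsJOf_sum_partExtensions (oldSet n m) j
    fun π ρ => ((π.filter (ReobservedWithFreq (oldSet n m) l ρ)).card : ℝ) *
      gibbsW σ VN ρ).trans h

lemma gfc_div_pow (N k : ℕ) {σ : ℝ} (hσ : σ ≠ 0) (γ : ℝ) :
    gfc N k σ γ / σ ^ k = genStirling σ γ N k := by
  rw [gfc_eq_pow_mul_genStirling, mul_div_cancel_left₀ _ (pow_ne_zero k hσ)]

lemma risingFac_mul_risingFac_sub {l : ℕ} (hl : 1 ≤ l) (σ : ℝ) (i : ℕ) :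
    risingFac (1 - σ) (l - 1) * risingFac (l - σ) i = risingFac (1 - σ) (i + l - 1) := by
  rw [show i + l - 1 = l - 1 + i by omega, risingFac_add, Nat.cast_sub hl]
  push_cast
  ring_nf

lemma freq_formula_eq_genStirling_formula {n m j l : ℕ} (hj : 1 ≤ j) (hl : 1 ≤ l) {σ : ℝ}
    (hσ : σ ≠ 0) (g : ℕ → ℝ) (v : ℝ) :
    (1 / cgfc n j σ) * (m.choose l : ℝ) * (-σ * risingFac (1 - σ) (l - 1)) *
        ∑ s ∈ Finset.Icc 1 (n - (j - 1)),
          (n.choose s : ℝ) * cgfc s 1 (σ - l) * cgfc (n - s) (j - 1) σ *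
            ∑ k ∈ Finset.range (m + 1),
              g (j + k) / v * (gfc (m - l) k σ (-(n : ℝ) + s + ((j : ℝ) - 1) * σ) / σ ^ k) =
      (m.choose l : ℝ) * (∑ i ∈ Finset.Icc 1 n, (n.choose i : ℝ) *
        risingFac (1 - σ) (i + l - 1) * genStirling σ 0 (n - i) (j - 1) *
          ∑ k ∈ Finset.range (m - l + 1), g (j + k) *
            genStirling σ (-(n : ℝ) + i + ((j : ℝ) - 1) * σ) (m - l) k) /
        (v * genStirling σ 0 n j) := by
  obtain ⟨j, rfl⟩ := Nat.exists_eq_add_of_le' hj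
  simp only [Nat.add_sub_cancel, cgfc_eq_pow_mul_genStirling n (j + 1), pow_succ]
  -- the other `j` blocks need at least `j` of the remaining `n - s` old elements
  rw [← Finset.sum_subset (Finset.Icc_subset_Icc_right (Nat.sub_le n j)) fun i hi hi' => by
    rw [genStirling_eq_zero_of_lt σ 0 (by simp only [Finset.mem_Icc] at hi hi'; omega)]; ring]
  rw [Finset.mul_sum, Finset.mul_sum, Finset.sum_div]
  refine Finset.sum_congr rfl fun i hi => ?_
  rw [← Finset.sum_subset (Finset.range_subset_range.mpr (by omega : m - l + 1 ≤ m + 1))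
    fun k hk hk' => by
      rw [gfc_div_pow _ _ hσ, genStirling_eq_zero_of_lt σ _ (by simp at hk hk'; omega)]; ring]
  have hi0 : i ≠ 0 := by have := (Finset.mem_Icc.mp hi).1; omega
  simp only [gfc_div_pow _ _ hσ, cgfc_one hi0,
    cgfc_eq_pow_mul_genStirling (n - i) j, ← risingFac_mul_risingFac_sub hl σ i, neg_sub,
    div_mul_eq_mul_div, ← Finset.sum_div]
  field_simp

theorem looking_backward_freq_estimator_incomplete_general
    (n m j : ℕ) (hj1 : 1 ≤ j)
    (σ : ℝ) (hσ0 : σ ≠ 0)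
    (V : ℕ → ℕ → ℝ)
    (l : ℕ) (hl1 : 1 ≤ l) :
    condExpK σ V n m j (fun ρ => (Rlcnt n m l ρ : ℝ)) =
      (1 / cgfc n j σ) * (Nat.choose m l : ℝ) * (-σ * risingFac (1 - σ) (l - 1)) *
        ∑ s ∈ Finset.Icc 1 (n - (j - 1)),
          (Nat.choose n s : ℝ) * cgfc s 1 (σ - l) * cgfc (n - s) (j - 1) σ *
            ∑ k ∈ Finset.range (m + 1),
              V (n + m) (j + k) / V n j *
                (gfc (m - l) k σ (-(n : ℝ) + (s : ℝ) + ((j : ℝ) - 1) * σ) / σ ^ k) := by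
  rw [condExpK, sum_withJ_Rlcnt_mul_gibbsW n m j hj1 l σ (V (n + m)), sum_partsJOf_gibbsW,
    card_oldSet, freq_formula_eq_genStirling_formula hj1 hl1 hσ0]

/-- expected number of old species re-observed with frequency `l`,
given only the number of blocks. -/
theorem looking_backward_freq_estimator_incomplete
    (n m j : ℕ) (hn : 1 ≤ n) (hm : 1 ≤ m) (hj1 : 1 ≤ j) (hjn : j ≤ n)
    (σ : ℝ) (hσ1 : σ < 1) (hσ0 : σ ≠ 0)
    (V : ℕ → ℕ → ℝ) (hV11 : V 1 1 = 1)
    (hVnn : ∀ N k, 1 ≤ k → k ≤ N → 0 ≤ V N k)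
    (hVrec : ∀ N k, 1 ≤ k → k ≤ N →
      V N k = V (N + 1) (k + 1) + ((N : ℝ) - (k : ℝ) * σ) * V (N + 1) k)
    (hVnj : 0 < V n j)
    (l : ℕ) (hl1 : 1 ≤ l) (hlm : l ≤ m) :
    condExpK σ V n m j (fun ρ => (Rlcnt n m l ρ : ℝ)) =
      (1 / cgfc n j σ) * (Nat.choose m l : ℝ) * (-σ * risingFac (1 - σ) (l - 1)) *
        ∑ s ∈ Finset.Icc 1 (n - (j - 1)),
          (Nat.choose n s : ℝ) * cgfc s 1 (σ - l) * cgfc (n - s) (j - 1) σ *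
            ∑ k ∈ Finset.range (m + 1),
              V (n + m) (j + k) / V n j *
                (gfc (m - l) k σ (-(n : ℝ) + (s : ℝ) + ((j : ℝ) - 1) * σ) / σ ^ k) :=
  looking_backward_freq_estimator_incomplete_general n m j hj1 σ hσ0 V l hl1
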